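/- Suppose a finite data set V with metric d admits a consistent clustering (intra-cluster set-distances under any split are strictly smaller than point-to-cluster distances from outside). Then for any two points x, y in the same cluster C and any point z in a different cluster, D(x,y) < D(x,z), where D is the transitive distance; i.e., intra-cluster transitive distances are strictly smaller than inter-cluster transitive distances. -/

import Mathlib

open scoped Classical

/-- The cost of a path (list of vertices): the maximum distance between
consecutive vertices (0 for trivial paths). -/
noncomputable def pathCost {V : Type*} [MetricSpace V] : List V → ℝ
  | [] => 0
  | [_] => 0
  | a :: b :: t => max (dist a b) (pathCost (b :: t))

/-- `l` is a path from `x` to `y`: a nonempty list starting at `x` and ending at `y`. -/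
def IsPathList {V : Type*} (x y : V) (l : List V) : Prop :=
  l.head? = some x ∧ l.getLast? = some y

/-- The transitive distance: the minimum (infimum) over all paths from `x` to `y`
of the maximum edge length along the path. -/
noncomputable def transDist {V : Type*} [MetricSpace V] (x y : V) : ℝ :=
  sInf {c | ∃ l : List V, IsPathList x y l ∧ pathCost l = c}

/-- The distance between two finite sets: the minimum pairwise distance. -/
noncomputable def finsetDist {V : Type*} [MetricSpace V] (A B : Finset V) : ℝ :=
  sInf {r | ∃ a ∈ A, ∃ b ∈ B, dist a b = r}

/-- `clusters` is a partition of `V` into clusters. -/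
def IsClustering {V : Type*} (clusters : Finset (Finset V)) : Prop :=
  ∀ x : V, ∃! C, C ∈ clusters ∧ x ∈ C

/-- A clustering is consistent with the metric if for every cluster `C`, every
point `y` outside `C`, and every partition of `C` into two nonempty parts `C₁`
and `C₂`, the distance between `C₁` and `C₂` is strictly smaller than the
distance from `y` to `C`. -/
def Consistent {V : Type*} [MetricSpace V] (clusters : Finset (Finset V)) : Prop :=
  ∀ C ∈ clusters, ∀ y : V, y ∉ C → ∀ C1 C2 : Finset V,
    C1.Nonempty → C2.Nonempty → Disjoint C1 C2 → C1 ∪ C2 = C →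
    finsetDist C1 C2 < finsetDist {y} C

section Aux

variable {V : Type*} [MetricSpace V]

lemma pathCost_nonneg : ∀ l : List V, 0 ≤ pathCost l
  | [] => le_refl _
  | [_] => le_refl _
  | _ :: _ :: _ => le_max_of_le_left dist_nonneg

lemma pathCost_mem : ∀ l : List V,
    pathCost l ∈ insert (0:ℝ) (Set.image2 dist (Set.univ : Set V) Set.univ)
  | [] => Set.mem_insert _ _
  | [_] => Set.mem_insert _ _
  | a :: b :: t => by
    rcases max_choice (dist a b) (pathCost (b :: t)) with h | h
    · rw [pathCost, h]
      exact Set.mem_insert_of_mem _ ⟨a, trivial, b, trivial, rfl⟩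
    · rw [pathCost, h]
      exact pathCost_mem (b :: t)

lemma costSet_bddBelow (x y : V) :
    BddBelow {c | ∃ l : List V, IsPathList x y l ∧ pathCost l = c} :=
  ⟨0, fun _ ⟨l, _, hc⟩ => hc ▸ pathCost_nonneg l⟩

lemma isPathList_pair (x y : V) : IsPathList x y [x, y] := by
  constructor <;> simp [IsPathList]

lemma transDist_le {x y : V} {l : List V} (h : IsPathList x y l) :
    transDist x y ≤ pathCost l :=
  csInf_le (costSet_bddBelow x y) ⟨l, h, rfl⟩

lemma transDist_exists [Fintype V] (x y : V) :
    ∃ l : List V, IsPathList x y l ∧ pathCost l = transDist x y := by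
  have hne : Set.Nonempty {c | ∃ l : List V, IsPathList x y l ∧ pathCost l = c} :=
    ⟨pathCost [x, y], [x, y], isPathList_pair x y, rfl⟩
  have hfin : Set.Finite {c | ∃ l : List V, IsPathList x y l ∧ pathCost l = c} := by
    apply Set.Finite.subset
      (Set.Finite.insert (0:ℝ)
        (Set.Finite.image2 dist (Set.finite_univ (α := V)) (Set.finite_univ (α := V))))
    rintro c ⟨l, _, rfl⟩
    exact pathCost_mem l
  exact hne.csInf_mem hfin

lemma finsetDist_set_eq (A B : Finset V) :
    {r | ∃ a ∈ A, ∃ b ∈ B, dist a b = r} = Set.image2 dist (A : Set V) (B : Set V) := by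
  ext r
  simp [Set.mem_image2]

lemma finsetDist_exists {A B : Finset V} (hA : A.Nonempty) (hB : B.Nonempty) :
    ∃ a ∈ A, ∃ b ∈ B, dist a b = finsetDist A B := by
  have hfin : Set.Finite {r | ∃ a ∈ A, ∃ b ∈ B, dist a b = r} := by
    rw [finsetDist_set_eq]
    exact Set.Finite.image2 dist A.finite_toSet B.finite_toSet
  have hne : Set.Nonempty {r | ∃ a ∈ A, ∃ b ∈ B, dist a b = r} := by
    obtain ⟨a, ha⟩ := hA; obtain ⟨b, hb⟩ := hB
    exact ⟨dist a b, a, ha, b, hb, rfl⟩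
  exact hne.csInf_mem hfin

lemma finsetDist_le {A B : Finset V} {a b : V} (ha : a ∈ A) (hb : b ∈ B) :
    finsetDist A B ≤ dist a b := by
  have hfin : Set.Finite {r | ∃ a ∈ A, ∃ b ∈ B, dist a b = r} := by
    rw [finsetDist_set_eq]
    exact Set.Finite.image2 dist A.finite_toSet B.finite_toSet
  exact csInf_le hfin.bddBelow ⟨a, ha, b, hb, rfl⟩

lemma pathCost_concat : ∀ (l : List V) (a b : V), l.getLast? = some a →
    pathCost (l ++ [b]) ≤ max (pathCost l) (dist a b)
  | [], a, b => by intro h; simp at h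
  | [c], a, b => by
    intro h
    simp only [List.getLast?_singleton, Option.some_inj] at h
    subst h
    simp [pathCost]
  | c :: d :: t, a, b => by
    intro h
    have h' : (d :: t).getLast? = some a := by
      rw [← h]; simp [List.getLast?_cons_cons]
    have ih := pathCost_concat (d :: t) a b h'
    show max (dist c d) (pathCost (d :: t ++ [b])) ≤
      max (max (dist c d) (pathCost (d :: t))) (dist a b)
    calc max (dist c d) (pathCost (d :: t ++ [b]))
        ≤ max (dist c d) (max (pathCost (d :: t)) (dist a b)) := max_le_max le_rfl ih
      _ = _ := (max_assoc _ _ _).symm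

lemma cross_lower (C : Finset V) (M : ℝ)
    (h : ∀ a ∈ C, ∀ b, b ∉ C → M ≤ dist a b) :
    ∀ (l : List V) (x z : V), x ∈ C → z ∉ C → IsPathList x z l → M ≤ pathCost l := by
  intro l
  induction l with
  | nil =>
    intro x z _ _ hp
    simp [IsPathList] at hp
  | cons a t ih =>
    intro x z hx hz hp
    have hax : a = x := by
      have := hp.1
      simp only [List.head?_cons, Option.some_inj] at this
      exact this
    subst hax
    cases t with
    | nil =>
      exfalso
      have := hp.2
      simp only [List.getLast?_singleton, Option.some_inj] at this
      exact hz (this ▸ hx)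
    | cons b t' =>
      by_cases hb : b ∈ C
      · have hlast : (b :: t').getLast? = some z := by
          rw [← hp.2]; simp [List.getLast?_cons_cons]
        have := ih b z hb hz ⟨rfl, hlast⟩
        exact le_trans this (le_max_right _ _)
      · have := h a hx b hb
        exact le_trans this (le_max_left _ _)

lemma isPathList_concat {x a : V} {l : List V} (h : IsPathList x a l) (b : V) :
    IsPathList x b (l ++ [b]) := by
  obtain ⟨h1, h2⟩ := h
  cases l with
  | nil => simp [IsPathList] at h1
  | cons c t =>
    refine ⟨by simpa using h1, ?_⟩
    exact List.getLast?_concat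

end Aux

/-- For a consistent clustering, intra-cluster transitive distances are strictly
smaller than inter-cluster transitive distances. -/
theorem transDist_intra_lt_inter {V : Type*} [Fintype V] [MetricSpace V]
    (clusters : Finset (Finset V)) (hpart : IsClustering clusters)
    (hsize : ∀ C ∈ clusters, 2 ≤ C.card)
    (hcons : Consistent clusters)
    (C C' : Finset V) (hC : C ∈ clusters) (hC' : C' ∈ clusters) (hne : C' ≠ C)
    (x y z : V) (hx : x ∈ C) (hy : y ∈ C) (hz : z ∈ C') :
    transDist x y < transDist x z := by
  have hzC : z ∉ C := by
    intro hzC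
    obtain ⟨D, _, huniq⟩ := hpart z
    exact hne ((huniq C' ⟨hC', hz⟩).trans (huniq C ⟨hC, hzC⟩).symm)
  have hCne : C.Nonempty := ⟨x, hx⟩
  set W : Finset V := Finset.univ \ C with hW
  have hWne : W.Nonempty := ⟨z, by simp [hW, hzC]⟩
  set M : ℝ := W.inf' hWne (fun w => finsetDist {w} C) with hM
  have hposd : ∀ w, w ∉ C → 0 < finsetDist {w} C := by
    intro w hw
    obtain ⟨a, ha, b, hb, hab⟩ := finsetDist_exists (Finset.singleton_nonempty w) hCne
    rw [Finset.mem_singleton] at ha; subst ha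
    rw [← hab]
    exact dist_pos.mpr (fun h => hw (h ▸ hb))
  have hMpos : 0 < M := by
    rw [hM, Finset.lt_inf'_iff]
    intro w hw
    exact hposd w (by simpa [hW] using hw)
  have hMle : ∀ a ∈ C, ∀ b, b ∉ C → M ≤ dist a b := by
    intro a ha b hb
    have h1 : M ≤ finsetDist {b} C := Finset.inf'_le _ (by simp [hW, hb])
    have h2 : finsetDist {b} C ≤ dist b a :=
      finsetDist_le (Finset.mem_singleton_self b) ha
    rw [dist_comm] at h2
    exact h1.trans h2
  have hlow : M ≤ transDist x z := by
    have hne' : Set.Nonempty {c | ∃ l : List V, IsPathList x z l ∧ pathCost l = c} :=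
      ⟨pathCost [x, z], [x, z], isPathList_pair x z, rfl⟩
    apply le_csInf hne'
    rintro c ⟨l, hl, rfl⟩
    exact cross_lower C M hMle l x z hx hzC hl
  have hup : transDist x y < M := by
    set C1 : Finset V := C.filter (fun a => transDist x a < M) with hC1
    have hxC1 : x ∈ C1 := by
      rw [hC1, Finset.mem_filter]
      refine ⟨hx, ?_⟩
      have h0 : transDist x x ≤ pathCost [x] :=
        transDist_le (by constructor <;> simp [IsPathList])
      have h1 : pathCost [x] = 0 := rfl
      calc transDist x x ≤ 0 := h1 ▸ h0
        _ < M := hMpos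
    have hyC1 : y ∈ C1 := by
      by_contra hyC1
      set C2 : Finset V := C \ C1 with hC2
      have hC2ne : C2.Nonempty := ⟨y, Finset.mem_sdiff.mpr ⟨hy, hyC1⟩⟩
      have hC1ne : C1.Nonempty := ⟨x, hxC1⟩
      have hdisj : Disjoint C1 C2 := Finset.disjoint_sdiff
      have hunion : C1 ∪ C2 = C :=
        Finset.union_sdiff_of_subset (Finset.filter_subset _ _)
      obtain ⟨w, hwW, hwM⟩ := Finset.exists_mem_eq_inf' hWne (fun w => finsetDist {w} C)
      have hwC : w ∉ C := by simpa [hW] using hwW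
      have hlt : finsetDist C1 C2 < M := by
        rw [hM, hwM]
        exact hcons C hC w hwC C1 C2 hC1ne hC2ne hdisj hunion
      obtain ⟨a, ha1, b, hb2, hab⟩ := finsetDist_exists hC1ne hC2ne
      obtain ⟨l, hl, hlc⟩ := transDist_exists x a
      have hbM : transDist x b < M := by
        calc transDist x b ≤ pathCost (l ++ [b]) := transDist_le (isPathList_concat hl b)
          _ ≤ max (pathCost l) (dist a b) := pathCost_concat l a b hl.2
          _ < M := max_lt (by rw [hlc]; exact (Finset.mem_filter.mp ha1).2)
              (by rw [hab]; exact hlt)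
      have hbC1 : b ∈ C1 := Finset.mem_filter.mpr ⟨(Finset.mem_sdiff.mp hb2).1, hbM⟩
      exact (Finset.mem_sdiff.mp hb2).2 hbC1
    exact (Finset.mem_filter.mp hyC1).2
  exact lt_of_lt_of_le hup hlow
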